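/- With e, f, k on ℚ(q)[X₀,X₁] as in the oscillator representation of ⁱU(A₁) (e(X₀^aX₁^b) = [2b]X₀^{a+1}X₁^{b-1}, f(X₀^aX₁^b) = [a]X₀^{a-1}X₁^{b+1}, k(X₀^aX₁^b) = q^{a-2b}X₀^aX₁^b), the relation f²e + e f² = (q + q⁻¹)(f e f − (q k + q⁻¹ k⁻¹) f) holds as an operator identity. -/
import Mathlib


noncomputable section

/-- The field ℚ(q) of rational functions over ℚ. -/
abbrev K : Type := RatFunc ℚ

/-- The indeterminate q. -/
def q : K := RatFunc.X

/-- The quantum integer [m]. -/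
def qint (m : ℤ) : K := (q ^ m - q ^ (-m)) / (q - q⁻¹)

/-- The monomial X₀^a X₁^b in ℚ(q)[X₀,X₁]. -/
def mono (a b : ℕ) : MvPolynomial (Fin 2) K :=
  MvPolynomial.monomial (Finsupp.single 0 a + Finsupp.single 1 b) (1 : K)

lemma hq0 : q ≠ 0 := by simpa [q] using RatFunc.X_ne_zero

lemma hq2 : q ^ 2 - 1 ≠ 0 := by
  intro h
  have h2 : (RatFunc.X : K) ^ 2 - 1 = 0 := h
  rw [show ((RatFunc.X : K) ^ 2 - 1) = algebraMap (Polynomial ℚ) K (Polynomial.X ^ 2 - 1) by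
    simp [map_sub, map_pow, RatFunc.algebraMap_X]] at h2
  have h3 : (Polynomial.X ^ 2 - 1 : Polynomial ℚ) = 0 :=
    (map_eq_zero_iff _ (RatFunc.algebraMap_injective ℚ)).mp h2
  have := congrArg (fun p => Polynomial.coeff p 2) h3
  simp [Polynomial.coeff_one] at this

lemma hqq : q - q⁻¹ ≠ 0 := by
  intro h
  apply hq2
  have h5 : (q - q⁻¹) * q = q ^ 2 - 1 := by field_simp [hq0]
  rw [h, zero_mul] at h5
  exact h5.symm

lemma qint_zero : qint 0 = 0 := by simp [qint]

set_option maxHeartbeats 4000000 in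
/-- the relation f²e + ef² = (q+q⁻¹)(fef − (qk + q⁻¹k⁻¹)f) in the
oscillator representation of ⁱU(A₁). -/
theorem stmt13 (e f k k' : Module.End K (MvPolynomial (Fin 2) K))
    (he : ∀ a b : ℕ, e (mono a b) = qint (2 * (b : ℤ)) • mono (a + 1) (b - 1))
    (hf : ∀ a b : ℕ, f (mono a b) = qint (a : ℤ) • mono (a - 1) (b + 1))
    (hk : ∀ a b : ℕ, k (mono a b) = (q ^ ((a : ℤ) - 2 * (b : ℤ))) • mono a b)
    (hk' : ∀ a b : ℕ, k' (mono a b) = (q ^ (2 * (b : ℤ) - (a : ℤ))) • mono a b) :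
    f ^ 2 * e + e * f ^ 2
      = (q + q⁻¹) • (f * e * f - (q • k + q⁻¹ • k') * f) := by
  apply (MvPolynomial.basisMonomials (Fin 2) K).ext
  intro d
  have hd : d = Finsupp.single 0 (d 0) + Finsupp.single 1 (d 1) := by
    ext i; fin_cases i <;> simp
  have hmono : (MvPolynomial.basisMonomials (Fin 2) K) d = mono (d 0) (d 1) := by
    have := congrFun (MvPolynomial.coe_basisMonomials (Fin 2) K) d
    rw [this, mono, ← hd]
  rw [hmono]
  generalize d 0 = a
  generalize d 1 = b
  have hq1 : q * q⁻¹ = 1 := mul_inv_cancel₀ hq0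
  have hD : (q - q⁻¹) * (q - q⁻¹)⁻¹ = 1 := mul_inv_cancel₀ hqq
  simp only [LinearMap.add_apply, Module.End.mul_apply, LinearMap.sub_apply,
    LinearMap.smul_apply, pow_two, he, hf, hk, hk', map_smul, smul_smul]
  rcases a with _|_|a <;> rcases b with _|b <;>
    simp only [qint_zero, Nat.sub_self, Nat.add_sub_cancel, Nat.sub_zero, Nat.zero_add,
      Nat.add_zero, Nat.cast_add, Nat.cast_ofNat, Nat.cast_one, Nat.cast_zero,
      zero_mul, mul_zero, zero_smul, map_zero, smul_zero, add_zero, zero_add, sub_self,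
      smul_smul, smul_sub, smul_add]
  case succ.zero.zero =>
    simp only [← add_smul, ← sub_smul]
    rw [show (0 : MvPolynomial (Fin 2) K) = (0 : K) • mono 0 1 from (zero_smul K _).symm]
    congr 1
    rw [show (0:ℤ) - 2 * 1 = -2 by norm_num, show (2:ℤ) * 1 - 0 = 2 by norm_num,
        show (2:ℤ) * 1 = 2 by norm_num]
    simp only [qint]
    simp only [neg_add, neg_sub, neg_mul, sub_eq_add_neg, zpow_add₀ hq0, zpow_neg, zpow_one,
      mul_inv]
    simp only [zpow_ofNat, ← inv_pow]
    linear_combination ((-1 : K) * q⁻¹ ^ 5 * (q - q⁻¹)⁻¹ ^ 3 + q * q⁻¹ ^ 4 * (q - q⁻¹)⁻¹ ^ 3 + (2 : K) * q ^ 2 * q⁻¹ ^ 3 * (q - q⁻¹)⁻¹ ^ 3 + (-2 : K) * q ^ 3 * q⁻¹ ^ 2 * (q - q⁻¹)⁻¹ ^ 3 + (-1 : K) * q ^ 4 * q⁻¹ * (q - q⁻¹)⁻¹ ^ 3 + q ^ 5 * (q - q⁻¹)⁻¹ ^ 3) * hq1 + (q * q⁻¹ ^ 4 * (q - q⁻¹)⁻¹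 + (-1 : K) * q * q⁻¹ ^ 5 * (q - q⁻¹)⁻¹ ^ 2 + q ^ 2 * q⁻¹ ^ 3 * (q - q⁻¹)⁻¹ + (-1 : K) * q ^ 3 * q⁻¹ ^ 2 * (q - q⁻¹)⁻¹ + (2 : K) * q ^ 3 * q⁻¹ ^ 3 * (q - q⁻¹)⁻¹ ^ 2 + (-1 : K) * q ^ 4 * q⁻¹ * (q - q⁻¹)⁻¹ + (-1 : K) * q ^ 5 * q⁻¹ * (q - q⁻¹)⁻¹ ^ 2) * hD
  case succ.zero.succ =>
    have hB : q ^ (b:ℤ) * (q ^ (b:ℤ))⁻¹ = 1 := mul_inv_cancel₀ (zpow_ne_zero _ hq0)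
    simp only [← add_smul, ← sub_smul]
    congr 1
    simp only [qint]
    rw [show (2:ℤ) * ((b:ℤ) + 1) = (b:ℤ) + b + 2 by ring,
        show (2:ℤ) * ((b:ℤ) + 1 + 1) = (b:ℤ) + b + 4 by ring]
    simp only [neg_add, neg_sub, neg_mul, sub_eq_add_neg, zpow_add₀ hq0, zpow_neg, zpow_one,
      mul_inv]
    simp only [zpow_ofNat, ← inv_pow]
    linear_combination ((q ^ (b : ℤ))⁻¹ ^ 2 * q⁻¹ ^ 5 * (q - q⁻¹)⁻¹ ^ 3 + (-1 : K) * (q ^ (b : ℤ))⁻¹ ^ 2 * q⁻¹ ^ 7 * (q - q⁻¹)⁻¹ ^ 3 + (-1 : K) * (q ^ (b : ℤ))⁻¹ ^ 2 * q * q⁻¹ ^ 4 * (q - q⁻¹)⁻¹ ^ 3 + (2 : K) * (q ^ (b : ℤ))⁻¹ ^ 2 * q * q⁻¹ ^ 6 * (q - q⁻¹)⁻¹ ^ 3 + (-1 : K) * (q ^ (b : ℤ))⁻¹ ^ 2 * q ^ 2 * q⁻¹ ^ 3 * (q - q⁻¹)⁻¹ ^ 3 + (q ^ (b : ℤ))⁻¹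 ^ 2 * q ^ 3 * q⁻¹ ^ 2 * (q - q⁻¹)⁻¹ ^ 3 + (-2 : K) * (q ^ (b : ℤ))⁻¹ ^ 2 * q ^ 3 * q⁻¹ ^ 4 * (q - q⁻¹)⁻¹ ^ 3 + (q ^ (b : ℤ))⁻¹ ^ 2 * q ^ 4 * q⁻¹ ^ 3 * (q - q⁻¹)⁻¹ ^ 3 + (-1 : K) * (q ^ (b : ℤ)) ^ 2 * q ^ 2 * q⁻¹ ^ 3 * (q - q⁻¹)⁻¹ ^ 3 + (q ^ (b : ℤ)) ^ 2 * q ^ 3 * q⁻¹ ^ 2 * (q - q⁻¹)⁻¹ ^ 3 + (-1 : K) * (q ^ (b : ℤ)) ^ 2 * q ^ 3 * q⁻¹ ^ 4 * (q - q⁻¹)⁻¹ ^ 3 + (q ^ (b : ℤ)) ^ 2 * q ^ 4 * q⁻¹ * (q - q⁻¹)⁻¹ ^ 3 + (2 : K) * (q ^ (b : ℤ)) ^ 2 * q ^ 4 * q⁻¹ ^ 3 * (q - q⁻¹)⁻¹ ^ 3 + (-1 : K) * (q ^ (b : ℤ)) ^ 2 * q ^ 5 * (q - q⁻¹)⁻¹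 ^ 3 + (-2 : K) * (q ^ (b : ℤ)) ^ 2 * q ^ 6 * q⁻¹ * (q - q⁻¹)⁻¹ ^ 3 + (q ^ (b : ℤ)) ^ 2 * q ^ 7 * (q - q⁻¹)⁻¹ ^ 3) * hq1 + ((q ^ (b : ℤ))⁻¹ ^ 2 * q * q⁻¹ ^ 6 * (q - q⁻¹)⁻¹ + (-1 : K) * (q ^ (b : ℤ))⁻¹ ^ 2 * q * q⁻¹ ^ 7 * (q - q⁻¹)⁻¹ ^ 2 + (q ^ (b : ℤ))⁻¹ ^ 2 * q ^ 2 * q⁻¹ ^ 6 * (q - q⁻¹)⁻¹ ^ 2 + (-1 : K) * (q ^ (b : ℤ))⁻¹ ^ 2 * q ^ 3 * q⁻¹ ^ 4 * (q - q⁻¹)⁻¹ + (q ^ (b : ℤ))⁻¹ ^ 2 * q ^ 3 * q⁻¹ ^ 5 * (q - q⁻¹)⁻¹ ^ 2 + (-1 : K) * (q ^ (b : ℤ))⁻¹ ^ 2 * q ^ 4 * q⁻¹ ^ 4 * (q - q⁻¹)⁻¹ ^ 2 + (q ^ (b : ℤ)) ^ 2 * q ^ 4 * q⁻¹ ^ 3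 * (q - q⁻¹)⁻¹ + (-1 : K) * (q ^ (b : ℤ)) ^ 2 * q ^ 4 * q⁻¹ ^ 4 * (q - q⁻¹)⁻¹ ^ 2 + (q ^ (b : ℤ)) ^ 2 * q ^ 5 * q⁻¹ ^ 3 * (q - q⁻¹)⁻¹ ^ 2 + (-1 : K) * (q ^ (b : ℤ)) ^ 2 * q ^ 6 * q⁻¹ * (q - q⁻¹)⁻¹ + (q ^ (b : ℤ)) ^ 2 * q ^ 6 * q⁻¹ ^ 2 * (q - q⁻¹)⁻¹ ^ 2 + (-1 : K) * (q ^ (b : ℤ)) ^ 2 * q ^ 7 * q⁻¹ * (q - q⁻¹)⁻¹ ^ 2) * hD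
  case succ.succ.zero =>
    have hA : q ^ (a:ℤ) * (q ^ (a:ℤ))⁻¹ = 1 := mul_inv_cancel₀ (zpow_ne_zero _ hq0)
    simp only [← add_smul, ← sub_smul]
    congr 1
    simp only [qint]
    rw [show (a:ℤ) + 1 - 2 * 1 = (a:ℤ) - 1 by ring,
        show (2:ℤ) * 1 - ((a:ℤ) + 1) = 1 - (a:ℤ) by ring,
        show (2:ℤ) * (1 + 1) = 4 by norm_num,
        show (2:ℤ) * 1 = 2 by norm_num]
    simp only [neg_add, neg_sub, neg_mul, sub_eq_add_neg, zpow_add₀ hq0, zpow_neg, zpow_one,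
      mul_inv]
    simp only [zpow_ofNat, ← inv_pow]
    linear_combination ((q ^ (a : ℤ))⁻¹ ^ 2 * q * q⁻¹ ^ 4 * (q - q⁻¹)⁻¹ + (-1 : K) * (q ^ (a : ℤ))⁻¹ ^ 2 * q * q⁻¹ ^ 5 * (q - q⁻¹)⁻¹ ^ 2 + (q ^ (a : ℤ))⁻¹ ^ 2 * q ^ 2 * q⁻¹ ^ 3 * (q - q⁻¹)⁻¹ + (q ^ (a : ℤ))⁻¹ ^ 2 * q ^ 3 * q⁻¹ ^ 3 * (q - q⁻¹)⁻¹ ^ 2 + (q ^ (a : ℤ)) * (q ^ (a : ℤ))⁻¹ * q * q⁻¹ ^ 4 * (q - q⁻¹)⁻¹ + (-1 : K) * (q ^ (a : ℤ)) * (q ^ (a : ℤ))⁻¹ * q * q⁻¹ ^ 5 * (q - q⁻¹)⁻¹ ^ 2 + (q ^ (a : ℤ)) * (q ^ (a : ℤ))⁻¹ * q ^ 2 * q⁻¹ ^ 3 * (q - q⁻¹)⁻¹ + (-1 : K) * (q ^ (a : ℤ)) * (q ^ (a : ℤ))⁻¹ * q ^ 3 * q⁻¹ ^ 2 * (q - q⁻¹)⁻¹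 + (2 : K) * (q ^ (a : ℤ)) * (q ^ (a : ℤ))⁻¹ * q ^ 3 * q⁻¹ ^ 3 * (q - q⁻¹)⁻¹ ^ 2 + (-1 : K) * (q ^ (a : ℤ)) * (q ^ (a : ℤ))⁻¹ * q ^ 4 * q⁻¹ * (q - q⁻¹)⁻¹ + (-1 : K) * (q ^ (a : ℤ)) * (q ^ (a : ℤ))⁻¹ * q ^ 5 * q⁻¹ * (q - q⁻¹)⁻¹ ^ 2 + (-1 : K) * (q ^ (a : ℤ)) ^ 2 * q ^ 3 * q⁻¹ ^ 2 * (q - q⁻¹)⁻¹ + (q ^ (a : ℤ)) ^ 2 * q ^ 3 * q⁻¹ ^ 3 * (q - q⁻¹)⁻¹ ^ 2 + (-1 : K) * (q ^ (a : ℤ)) ^ 2 * q ^ 4 * q⁻¹ * (q - q⁻¹)⁻¹ + (-1 : K) * (q ^ (a : ℤ)) ^ 2 * q ^ 5 * q⁻¹ * (q - q⁻¹)⁻¹ ^ 2) * hD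
  case succ.succ.succ =>
    have hA : q ^ (a:ℤ) * (q ^ (a:ℤ))⁻¹ = 1 := mul_inv_cancel₀ (zpow_ne_zero _ hq0)
    have hB : q ^ (b:ℤ) * (q ^ (b:ℤ))⁻¹ = 1 := mul_inv_cancel₀ (zpow_ne_zero _ hq0)
    simp only [← add_smul, ← sub_smul]
    congr 1
    simp only [qint]
    rw [show (a:ℤ) + 1 - 2 * ((b:ℤ) + 1 + 1) = (a:ℤ) - b - b - 3 by ring,
        show 2 * ((b:ℤ) + 1 + 1) - ((a:ℤ) + 1) = (b:ℤ) + b - a + 3 by ring,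
        show (2:ℤ) * ((b:ℤ) + 1) = (b:ℤ) + b + 2 by ring,
        show (2:ℤ) * ((b:ℤ) + 1 + 1 + 1) = (b:ℤ) + b + 6 by ring,
        show (2:ℤ) * ((b:ℤ) + 1 + 1) = (b:ℤ) + b + 4 by ring]
    simp only [neg_add, neg_sub, neg_mul, sub_eq_add_neg, zpow_add₀ hq0, zpow_neg, zpow_one,
      mul_inv]
    simp only [zpow_ofNat, ← inv_pow]
    linear_combination ((q ^ (b : ℤ))⁻¹ ^ 2 * q ^ 2 * q⁻¹ ^ 5 * (q - q⁻¹)⁻¹ ^ 3 + (q ^ (b : ℤ))⁻¹ ^ 2 * q ^ 3 * q⁻¹ ^ 4 * (q - q⁻¹)⁻¹ ^ 3 + (-1 : K) * (q ^ (b : ℤ))⁻¹ ^ 2 * q ^ 3 * q⁻¹ ^ 6 * (q - q⁻¹)⁻¹ ^ 3 + (-1 : K) * (q ^ (b : ℤ))⁻¹ ^ 2 * q ^ 4 * q⁻¹ ^ 5 * (q - q⁻¹)⁻¹ ^ 3 + (-1 : K) * (q ^ (b : ℤ)) ^ 2 * q ^ 4 * q⁻¹ ^ 3 * (q - q⁻¹)⁻¹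 ^ 3 + (-1 : K) * (q ^ (b : ℤ)) ^ 2 * q ^ 5 * q⁻¹ ^ 2 * (q - q⁻¹)⁻¹ ^ 3 + (q ^ (b : ℤ)) ^ 2 * q ^ 5 * q⁻¹ ^ 4 * (q - q⁻¹)⁻¹ ^ 3 + (q ^ (b : ℤ)) ^ 2 * q ^ 6 * q⁻¹ ^ 3 * (q - q⁻¹)⁻¹ ^ 3) * hA + ((-1 : K) * (q ^ (b : ℤ))⁻¹ ^ 2 * q ^ 2 * q⁻¹ ^ 5 * (q - q⁻¹)⁻¹ ^ 3 + (-1 : K) * (q ^ (b : ℤ))⁻¹ ^ 2 * q ^ 3 * q⁻¹ ^ 4 * (q - q⁻¹)⁻¹ ^ 3 + (q ^ (b : ℤ)) ^ 2 * q ^ 4 * q⁻¹ ^ 3 * (q - q⁻¹)⁻¹ ^ 3 + (q ^ (b : ℤ)) ^ 2 * q ^ 5 * q⁻¹ ^ 2 * (q - q⁻¹)⁻¹ ^ 3 + (q ^ (a : ℤ))⁻¹ ^ 2 * (q ^ (b : ℤ))⁻¹ ^ 2 * q⁻¹ ^ 7 * (q - q⁻¹)⁻¹ ^ 3 + (-1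 : K) * (q ^ (a : ℤ))⁻¹ ^ 2 * (q ^ (b : ℤ)) ^ 2 * q ^ 2 * q⁻¹ ^ 5 * (q - q⁻¹)⁻¹ ^ 3 + (q ^ (a : ℤ)) ^ 2 * (q ^ (b : ℤ))⁻¹ ^ 2 * q ^ 5 * q⁻¹ ^ 2 * (q - q⁻¹)⁻¹ ^ 3 + (-1 : K) * (q ^ (a : ℤ)) ^ 2 * (q ^ (b : ℤ)) ^ 2 * q ^ 7 * (q - q⁻¹)⁻¹ ^ 3) * hq1 + ((q ^ (a : ℤ))⁻¹ ^ 2 * (q ^ (b : ℤ)) ^ 2 * q ^ 3 * q⁻¹ ^ 4 * (q - q⁻¹)⁻¹ + (-1 : K) * (q ^ (a : ℤ))⁻¹ ^ 2 * (q ^ (b : ℤ)) ^ 2 * q ^ 3 * q⁻¹ ^ 5 * (q - q⁻¹)⁻¹ ^ 2 + (q ^ (a : ℤ))⁻¹ ^ 2 * (q ^ (b : ℤ)) ^ 2 * q ^ 4 * q⁻¹ ^ 3 * (q - q⁻¹)⁻¹ + (q ^ (a : ℤ))⁻¹ ^ 2 * (q ^ (b : ℤ)) ^ 2 * q ^ 5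 * q⁻¹ ^ 3 * (q - q⁻¹)⁻¹ ^ 2 + (q ^ (a : ℤ)) * (q ^ (a : ℤ))⁻¹ * (q ^ (b : ℤ))⁻¹ ^ 2 * q * q⁻¹ ^ 6 * (q - q⁻¹)⁻¹ + (-1 : K) * (q ^ (a : ℤ)) * (q ^ (a : ℤ))⁻¹ * (q ^ (b : ℤ))⁻¹ ^ 2 * q * q⁻¹ ^ 7 * (q - q⁻¹)⁻¹ ^ 2 + (q ^ (a : ℤ)) * (q ^ (a : ℤ))⁻¹ * (q ^ (b : ℤ))⁻¹ ^ 2 * q ^ 2 * q⁻¹ ^ 5 * (q - q⁻¹)⁻¹ + (q ^ (a : ℤ)) * (q ^ (a : ℤ))⁻¹ * (q ^ (b : ℤ))⁻¹ ^ 2 * q ^ 3 * q⁻¹ ^ 5 * (q - q⁻¹)⁻¹ ^ 2 + (-1 : K) * (q ^ (a : ℤ)) * (q ^ (a : ℤ))⁻¹ * (q ^ (b : ℤ)) ^ 2 * q ^ 5 * q⁻¹ ^ 2 * (q - q⁻¹)⁻¹ + (q ^ (a : ℤ)) * (q ^ (a : ℤ))⁻¹ * (q ^ (b : ℤ)) ^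 2 * q ^ 5 * q⁻¹ ^ 3 * (q - q⁻¹)⁻¹ ^ 2 + (-1 : K) * (q ^ (a : ℤ)) * (q ^ (a : ℤ))⁻¹ * (q ^ (b : ℤ)) ^ 2 * q ^ 6 * q⁻¹ * (q - q⁻¹)⁻¹ + (-1 : K) * (q ^ (a : ℤ)) * (q ^ (a : ℤ))⁻¹ * (q ^ (b : ℤ)) ^ 2 * q ^ 7 * q⁻¹ * (q - q⁻¹)⁻¹ ^ 2 + (-1 : K) * (q ^ (a : ℤ)) ^ 2 * (q ^ (b : ℤ))⁻¹ ^ 2 * q ^ 3 * q⁻¹ ^ 4 * (q - q⁻¹)⁻¹ + (q ^ (a : ℤ)) ^ 2 * (q ^ (b : ℤ))⁻¹ ^ 2 * q ^ 3 * q⁻¹ ^ 5 * (q - q⁻¹)⁻¹ ^ 2 + (-1 : K) * (q ^ (a : ℤ)) ^ 2 * (q ^ (b : ℤ))⁻¹ ^ 2 * q ^ 4 * q⁻¹ ^ 3 * (q - q⁻¹)⁻¹ + (-1 : K) * (q ^ (a : ℤ)) ^ 2 * (q ^ (b : ℤ))⁻¹ ^ 2 * q ^ 5 * q⁻¹ ^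 3 * (q - q⁻¹)⁻¹ ^ 2) * hD
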